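/- arXiv:1903.07043 — 10 statements merged into one kernel-verified Lean document; each statement's English description precedes it below -/
import Mathlib

section
/- If G is an abelian group, then G contains no weak Sierpiński subset; i.e., there are no g, h ∈ G, subset E ⊆ G, and distinct elements a, b ∈ E with gE = E \ {a} and hE = E \ {b}. -/
/-- An abelian group contains no weak Sierpiński subset. -/
theorem abelian_no_wS_subset (G : Type*) [CommGroup G] :
    ¬ ∃ (g h : G) (E : Set G) (a b : G), a ∈ E ∧ b ∈ E ∧ a ≠ b ∧
      (g * ·) '' E = E \ {a} ∧ (h * ·) '' E = E \ {b} := by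
  rintro ⟨g, h, E, a, b, haE, hbE, hab, hg, hh⟩
  have injh : Function.Injective (h * ·) := mul_right_injective h
  have injg : Function.Injective (g * ·) := mul_right_injective g
  have e1 : (h * ·) '' ((g * ·) '' E) = (E \ {b}) \ {h * a} := by
    rw [hg, Set.image_diff injh, hh, Set.image_singleton]
  have e2 : (g * ·) '' ((h * ·) '' E) = (E \ {a}) \ {g * b} := by
    rw [hh, Set.image_diff injg, hg, Set.image_singleton]
  have comm : (h * ·) '' ((g * ·) '' E) = (g * ·) '' ((h * ·) '' E) := by
    rw [Set.image_image, Set.image_image]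
    simp only [mul_left_comm]
  have key : (E \ {b}) \ {h * a} = (E \ {a}) \ {g * b} := by
    rw [← e1, ← e2, comm]
  have hnot : a ∉ (E \ {a}) \ {g * b} := fun hmem => hmem.1.2 rfl
  rw [← key] at hnot
  have : a = h * a := by
    by_contra hne
    exact hnot ⟨⟨haE, hab⟩, fun hs => hne hs⟩
  have h1 : h = 1 := by
    have := mul_right_cancel (a := h) (b := a) (c := 1) (by simpa using this.symm)
    simpa using this
  rw [h1] at hh
  simp only [one_mul] at hh
  have : b ∈ E \ {b} := by
    rw [← hh]
    exact ⟨b, hbE, by simp⟩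
  exact this.2 rfl
end

section
/- Let G be a group, E ⊆ G, g, h ∈ G, and a ≠ b ∈ E with gE = E \ {a} and hE = E \ {b}. Then for every element γ in the subsemigroup (without identity) generated by {g, h}, the set γE is properly contained in E. -/
def Subsemigroup.strictlyShrinking {G : Type*} [Semigroup G] (E : Set G) : Subsemigroup G where
  carrier := {γ | (γ * ·) '' E ⊂ E}
  mul_mem' {x y} hx hy := by
    have image_mul : ((x * y) * ·) '' E = (x * ·) '' ((y * ·) '' E) := by
      rw [Set.image_image]
      simp only [mul_assoc]
    change ((x * y) * ·) '' E ⊂ E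
    rw [image_mul]
    exact (Set.image_mono hy.subset).trans_lt hx

theorem Subsemigroup.mem_strictlyShrinking {G : Type*} [Semigroup G] {E : Set G} {γ : G} :
    γ ∈ strictlyShrinking E ↔ (γ * ·) '' E ⊂ E :=
  Iff.rfl

theorem wS_semigroup_image_ssubset_general (G : Type*) [Group G] (g h : G) (E : Set G)
    (a b : G) (ha : a ∈ E) (hb : b ∈ E)
    (hgE : (g * ·) '' E = E \ {a}) (hhE : (h * ·) '' E = E \ {b}) :
    ∀ γ ∈ Subsemigroup.closure ({g, h} : Set G), (γ * ·) '' E ⊂ E := by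
  have generators_shrink : ({g, h} : Set G) ⊆ Subsemigroup.strictlyShrinking E := by
    rintro γ (rfl | rfl)
    · rw [SetLike.mem_coe, Subsemigroup.mem_strictlyShrinking, hgE]
      exact Set.sdiff_singleton_ssubset.mpr ha
    · rw [SetLike.mem_coe, Subsemigroup.mem_strictlyShrinking, hhE]
      exact Set.sdiff_singleton_ssubset.mpr hb
  exact fun γ hγ => Subsemigroup.closure_le.mpr generators_shrink hγ

/-- If E is a (g,h)-weak Sierpiński subset, then for every γ in the non-unital
subsemigroup generated by {g,h}, γE is properly contained in E. -/
theorem wS_semigroup_image_ssubset (G : Type*) [Group G] (g h : G) (E : Set G)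
    (a b : G) (ha : a ∈ E) (hb : b ∈ E) (hab : a ≠ b)
    (hgE : (g * ·) '' E = E \ {a}) (hhE : (h * ·) '' E = E \ {b}) :
    ∀ γ ∈ Subsemigroup.closure ({g, h} : Set G), (γ * ·) '' E ⊂ E :=
  wS_semigroup_image_ssubset_general G g h E a b ha hb hgE hhE
end

section
/- Let G be a group with a (g,h)-weak Sierpiński subset E. Then neither g nor h is a torsion element; in particular, both have infinite order. -/
private lemma wS_aux {G : Type*} [Group G] (g : G) (E : Set G) (a : G)
    (ha : a ∈ E) (hgE : (g * ·) '' E = E \ {a}) : ¬ IsOfFinOrder g := by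
  intro hfin
  have key : ∀ n : ℕ, (g ^ (n + 1) * ·) '' E ⊆ E \ {a} := by
    intro n
    induction n with
    | zero => simpa using hgE.le
    | succ n ih =>
        rintro x ⟨y, hy, rfl⟩
        have h1 : g ^ (n + 1) * y ∈ E \ {a} := ih ⟨y, hy, rfl⟩
        have h2 : g * (g ^ (n + 1) * y) ∈ E \ {a} := by
          rw [← hgE]; exact ⟨g ^ (n + 1) * y, h1.1, rfl⟩
        simpa [pow_succ', mul_assoc] using h2
  obtain ⟨n, hnpos, hgn⟩ := isOfFinOrder_iff_pow_eq_one.mp hfin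
  obtain ⟨m, rfl⟩ := Nat.exists_eq_add_of_lt hnpos
  have : a ∈ E \ {a} := key m ⟨a, ha, by rw [show m + 1 = 0 + m + 1 from by ring, hgn]; exact one_mul a⟩
  exact this.2 rfl

/-- If a group has a (g,h)-weak Sierpiński subset, then neither g nor h is torsion. -/
theorem wS_not_torsion (G : Type*) [Group G] (g h : G) (E : Set G)
    (a b : G) (ha : a ∈ E) (hb : b ∈ E) (hab : a ≠ b)
    (hgE : (g * ·) '' E = E \ {a}) (hhE : (h * ·) '' E = E \ {b}) :
    ¬ IsOfFinOrder g ∧ ¬ IsOfFinOrder h :=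
  ⟨wS_aux g E a ha hgE, wS_aux h E b hb hhE⟩
end

section
/- Let G be a group with a (g,h)-weak Sierpiński subset E, and suppose the pair (g,h) does not freely generate the subgroup H = ⟨g,h⟩ (i.e., some nontrivial reduced word in g,h equals the identity). Then there is a (g,h)-weak Sierpiński subset contained in H, namely a subset E' ⊆ H with distinct a', b' ∈ E' satisfying gE' = E' \ {a'} and hE' = E' \ {b'}. -/
/-!
Let `H = ⟨g, h⟩`. Translating `E` on the right by `a⁻¹` and intersecting with `H` gives
`X ⊆ H` with `gX = X \ {1}` and `hX = X \ {b a⁻¹}`; if `b a⁻¹ ∈ H`, this `X` is the required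
set. Otherwise `hX = X`, so in the graph on `H` with edges `y — s y` (`s = g^±1, h^±1`) the edge
`1 — g⁻¹` is the only edge leaving `X`; the set built from `b` does the same for `1 — h⁻¹`, and
complements and right translates of the two give such a cut for every edge at `1`. A nontrivial
reduced word, read as a non-backtracking walk from `1`, leaves the cut set of its first edge and
could only come back through that edge, which would make a shorter reduced word trivial.
Hence `(g, h)` is a free pair.
-/

open Function

theorem image_mul_left_preimage_mul_right_inter {G : Type*} [Group G] {g a : G} {E : Set G}
    {H : Subgroup G} (hg : g ∈ H) (hE : (g * ·) '' E = E \ {a}) (c : G) :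
    (g * ·) '' ((· * c) ⁻¹' E ∩ H) = ((· * c) ⁻¹' E ∩ H) \ {a * c⁻¹} := by
  ext u
  have hu := Set.ext_iff.1 hE (u * c)
  simp only [Set.image_mul_left, Set.mem_preimage, Set.mem_sdiff, Set.mem_singleton_iff,
    Set.mem_inter_iff, SetLike.mem_coe, mul_assoc] at hu ⊢
  rw [hu, H.mul_mem_cancel_left (H.inv_mem hg), eq_mul_inv_iff_mul_eq]
  tauto

namespace FreeGroup

variable {α G : Type*} [Group G] (f : α → G)

theorem lift_mk_singleton_not (x : α × Bool) :
    lift f (mk [(x.1, !x.2)]) = (lift f (mk [x]))⁻¹ := by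
  obtain ⟨a, _ | _⟩ := x <;> simp

theorem lift_mk_append_singleton (L : List (α × Bool)) (x : α × Bool) :
    lift f (mk (L ++ [x])) = lift f (mk L) * lift f (mk [x]) := by
  rw [← mul_mk, _root_.map_mul]

theorem lift_mk_cons (m : α × Bool) (L : List (α × Bool)) :
    lift f (mk (m :: L)) = lift f (mk [m]) * lift f (mk L) := by
  rw [← _root_.map_mul, mul_mk, List.singleton_append]

/-- In the graph on `G` with edges `y — lift f (mk [m]) * y` for the letters `m`, the set `S`
contains `p` and the edge `p — lift f (mk [x]) * p` is the only edge leaving `S`. -/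
def IsEdgeCut (S : Set G) (p : G) (x : α × Bool) : Prop :=
  p ∈ S ∧ lift f (mk [x]) * p ∉ S ∧
    ∀ y ∈ S, ∀ m : α × Bool, lift f (mk [m]) * y ∉ S → y = p ∧ m = x

variable {f} {S : Set G} {p : G} {x : α × Bool}

theorem IsEdgeCut.compl (h : IsEdgeCut f S p x) :
    IsEdgeCut f Sᶜ (lift f (mk [x]) * p) (x.1, !x.2) := by
  obtain ⟨hp, hxp, hexit⟩ := h
  refine ⟨hxp, by rwa [lift_mk_singleton_not, inv_mul_cancel_left, Set.notMem_compl_iff],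
    fun y hy m hmy => ?_⟩
  have hback : lift f (mk [(m.1, !m.2)]) * (lift f (mk [m]) * y) ∉ S := by
    rwa [lift_mk_singleton_not, inv_mul_cancel_left]
  obtain ⟨hp', rfl⟩ := hexit _ (not_not.1 hmy) _ hback
  refine ⟨?_, by simp⟩
  rw [← hp', lift_mk_singleton_not, inv_mul_cancel_left]

theorem IsEdgeCut.preimage_mul_right (h : IsEdgeCut f S p x) (k : G) :
    IsEdgeCut f ((· * k) ⁻¹' S) (p * k⁻¹) x := by
  obtain ⟨hp, hxp, hexit⟩ := h
  refine ⟨by simpa using hp, by simpa [mul_assoc] using hxp, fun y hy m hmy => ?_⟩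
  obtain ⟨hyp, rfl⟩ := hexit _ hy m (by simpa [mul_assoc] using hmy)
  exact ⟨eq_mul_inv_of_mul_eq hyp, rfl⟩

theorem IsEdgeCut.reverse (h : IsEdgeCut f S 1 x) :
    IsEdgeCut f ((· * lift f (mk [x])) ⁻¹' Sᶜ) 1 (x.1, !x.2) := by
  simpa using h.compl.preimage_mul_right (lift f (mk [x]))

theorem lift_mk_append_singleton_notMem {T : α × Bool → Set G}
    (hT : ∀ x, IsEdgeCut f (T x) 1 x) :
    ∀ (L : List (α × Bool)) (x : α × Bool),
      IsReduced (L ++ [x]) → lift f (mk (L ++ [x])) ∉ T x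
  | [], x, _ => by simpa using (hT x).2.1
  | m :: L, x, hred => by
    have hL := lift_mk_append_singleton_notMem hT L x (hred.infix ⟨[m], [], by simp⟩)
    intro hmem
    rw [List.cons_append, lift_mk_cons] at hmem
    have hback :
        lift f (mk [(m.1, !m.2)]) * (lift f (mk [m]) * lift f (mk (L ++ [x]))) ∉ T x := by
      rwa [lift_mk_singleton_not, inv_mul_cancel_left]
    obtain ⟨hone, hmx⟩ := (hT x).2.2 _ hmem _ hback
    have hL1 : lift f (mk L) = 1 := by
      rwa [lift_mk_append_singleton, ← hmx, lift_mk_singleton_not, ← mul_assoc, mul_inv_eq_one,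
        mul_eq_left] at hone
    rcases List.eq_nil_or_concat' L with rfl | ⟨L', y, rfl⟩
    · rw [← hmx] at hred
      simp [IsReduced] at hred
    · exact lift_mk_append_singleton_notMem hT L' y (hred.infix ⟨[m], [x], by simp⟩)
        (hL1 ▸ (hT y).1)
termination_by L => L.length

theorem lift_injective_of_isEdgeCut (hcut : ∀ a : α, ∃ S : Set G, IsEdgeCut f S 1 (a, false)) :
    Injective (lift f) := by
  classical
  have hcut' : ∀ x : α × Bool, ∃ T : Set G, IsEdgeCut f T 1 x := by
    rintro ⟨a, _ | _⟩
    · exact hcut a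
    · obtain ⟨S, hS⟩ := hcut a
      exact ⟨_, hS.reverse⟩
  choose T hT using hcut'
  refine (injective_iff_map_eq_one _).2 fun w hw => ?_
  by_contra hne
  obtain ⟨L, x, hLx⟩ :=
    (List.eq_nil_or_concat' w.toWord).resolve_left (toWord_eq_nil_iff.not.2 hne)
  have hnotMem := lift_mk_append_singleton_notMem hT L x (hLx ▸ isReduced_toWord)
  rw [← hLx, mk_toWord, hw] at hnotMem
  exact hnotMem (hT x).1

theorem isEdgeCut_of_image_mul_left_eq {a : α} (hp : p ∈ S)
    (ha : (f a * ·) '' S = S \ {p}) (hb : ∀ b ≠ a, (f b * ·) '' S = S) :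
    IsEdgeCut f S p (a, false) := by
  simp only [Set.image_mul_left, Set.ext_iff, Set.mem_preimage, Set.mem_sdiff,
    Set.mem_singleton_iff] at ha hb
  have hclosed : ∀ b, ∀ y ∈ S, f b * y ∈ S := by
    intro b y hy
    by_cases hba : b = a
    · subst hba; exact ((ha _).1 (by simpa using hy)).1
    · exact (hb b hba _).1 (by simpa using hy)
  refine ⟨hp, fun h => ((ha p).1 (by simpa using h)).2 rfl, ?_⟩
  rintro y hy ⟨b, _ | _⟩ hmy <;>
    simp only [lift_mk, List.map_cons, List.map_nil, List.prod_cons, List.prod_nil, mul_one,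
      cond_false, cond_true] at hmy
  · by_cases hba : b = a
    · subst hba
      by_contra hyp
      exact hmy ((ha y).2 ⟨hy, fun h => hyp ⟨h, rfl⟩⟩)
    · exact absurd ((hb b hba y).2 hy) hmy
  · exact absurd (hclosed b y hy) hmy

theorem isEdgeCut_preimage_mul_right_inter {H : Subgroup G}
    (hf : ∀ b, f b ∈ H) {E : Set G} {a : α} {c : G} (hc : c ∈ E)
    (ha : (f a * ·) '' E = E \ {c})
    (hb : ∀ b ≠ a, ∃ e, e * c⁻¹ ∉ H ∧ (f b * ·) '' E = E \ {e}) :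
    IsEdgeCut f ((· * c) ⁻¹' E ∩ H) 1 (a, false) := by
  refine isEdgeCut_of_image_mul_left_eq ⟨by simpa using hc, H.one_mem⟩
    (by simpa only [mul_inv_cancel] using image_mul_left_preimage_mul_right_inter (hf a) ha c)
    fun b hba => ?_
  obtain ⟨e, he, hbE⟩ := hb b hba
  rw [image_mul_left_preimage_mul_right_inter (hf b) hbE c]
  exact Set.sdiff_singleton_eq_self fun hmem => he hmem.2

end FreeGroup

/-- If G has a (g,h)-weak Sierpiński subset and (g,h) is not a free pair, then the
subgroup H = ⟨g,h⟩ itself contains a (g,h)-weak Sierpiński subset. -/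
theorem wS_in_subgroup (G : Type*) [Group G] (g h : G) (E : Set G)
    (a b : G) (ha : a ∈ E) (hb : b ∈ E) (hab : a ≠ b)
    (hgE : (g * ·) '' E = E \ {a}) (hhE : (h * ·) '' E = E \ {b})
    (hnotfree : ¬ Function.Injective
      (FreeGroup.lift (fun x : Bool => if x then g else h) : FreeGroup Bool →* G)) :
    ∃ (E' : Set G) (a' b' : G),
      E' ⊆ (Subgroup.closure ({g, h} : Set G) : Set G) ∧
      a' ∈ E' ∧ b' ∈ E' ∧ a' ≠ b' ∧
      (g * ·) '' E' = E' \ {a'} ∧ (h * ·) '' E' = E' \ {b'} := by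
  set H := Subgroup.closure ({g, h} : Set G)
  have hg : g ∈ H := Subgroup.subset_closure (by simp)
  have hh : h ∈ H := Subgroup.subset_closure (by simp)
  by_cases hba : b * a⁻¹ ∈ H
  · refine ⟨(· * a) ⁻¹' E ∩ H, 1, b * a⁻¹, Set.inter_subset_right,
      ⟨by simpa using ha, H.one_mem⟩, ⟨by simpa using hb, hba⟩,
      fun h1 => hab (mul_inv_eq_one.1 h1.symm).symm, ?_,
      image_mul_left_preimage_mul_right_inter hh hhE a⟩
    simpa only [mul_inv_cancel] using image_mul_left_preimage_mul_right_inter hg hgE a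
  have hgen : ∀ x : Bool, (if x then g else h) ∈ H := Bool.forall_bool.2 ⟨hh, hg⟩
  refine absurd (FreeGroup.lift_injective_of_isEdgeCut ?_) hnotfree
  rintro (_ | _)
  · refine ⟨_, FreeGroup.isEdgeCut_preimage_mul_right_inter hgen hb hhE ?_⟩
    rintro (_ | _) hne
    · exact absurd rfl hne
    · exact ⟨a, fun hmem => hba (by simpa using H.inv_mem hmem), hgE⟩
  · refine ⟨_, FreeGroup.isEdgeCut_preimage_mul_right_inter hgen ha hgE ?_⟩
    rintro (_ | _) hne
    · exact ⟨b, hba, hhE⟩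
    · exact absurd rfl hne
end

section
/- Let G be a group with elements g, h such that H = ⟨g,h⟩ has presentation ⟨g, h ∣ (h⁻¹g)^k⟩ for some k ≥ 2 (i.e., H is the free product of the infinite cyclic group ⟨g⟩ and the cyclic group ⟨h⁻¹g⟩ of order k). Then the pair (g, h⁻¹gh) freely generates a free subgroup of rank two in H. -/
section Aux

private lemma addLeft_pow_congr (k n : ℕ) :
    ((FreeGroup.freeGroupCongr (Equiv.addLeft (1 : ZMod k))).toEquiv) ^ n
      = (FreeGroup.freeGroupCongr (Equiv.addLeft ((n : ZMod k)))).toEquiv := by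
  induction n with
  | zero =>
      have h0 : (Equiv.addLeft ((0:ℕ) : ZMod k)) = Equiv.refl (ZMod k) := by
        ext x; simp
      rw [h0, pow_zero, FreeGroup.freeGroupCongr_refl]; rfl
  | succ n ih =>
      rw [pow_succ, ih]
      ext x
      have hcomp : (⇑(Equiv.addLeft ((n : ZMod k))) ∘ ⇑(Equiv.addLeft (1 : ZMod k)))
          = ⇑(Equiv.addLeft (((n+1 : ℕ) : ZMod k))) := by
        funext y; simp [Equiv.addLeft]; push_cast; ring
      simp only [Equiv.Perm.mul_apply, MulEquiv.toEquiv_eq_coe, MulEquiv.coe_toEquiv,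
        FreeGroup.freeGroupCongr_apply]
      rw [FreeGroup.map.comp, hcomp]

end Aux

/-- If g, h generate a subgroup with presentation ⟨g, h ∣ (h⁻¹g)^k⟩, k ≥ 2, then
(g, h⁻¹gh) freely generates a free subgroup of rank two. -/
theorem free_pair_in_Gk (G : Type*) [Group G] (g h : G) (k : ℕ) (hk : 2 ≤ k)
    (hpres : (FreeGroup.lift (fun x : Bool => if x then g else h) :
        FreeGroup Bool →* G).ker =
      Subgroup.normalClosure
        {((FreeGroup.of false)⁻¹ * FreeGroup.of true) ^ k}) :
    Function.Injective
      (FreeGroup.lift (fun x : Bool => if x then g else h⁻¹ * g * h) :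
        FreeGroup Bool →* G) := by
  haveI : NeZero k := ⟨by omega⟩
  haveI : Fact (1 < k) := ⟨by omega⟩
  -- the concrete model
  set F := FreeGroup (ZMod k)
  let σ : F ≃* F := FreeGroup.freeGroupCongr (Equiv.addLeft (1 : ZMod k))
  let a' : Equiv.Perm F := σ.toEquiv
  let T : F →* Equiv.Perm F := MulAction.toPermHom F F
  let g' : Equiv.Perm F := T (FreeGroup.of (0 : ZMod k))
  let h' : Equiv.Perm F := g' * a'⁻¹
  -- a' has order dividing k
  have ha'k : a' ^ k = 1 := by
    show σ.toEquiv ^ k = 1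
    rw [addLeft_pow_congr]
    have h0 : (Equiv.addLeft ((k:ℕ) : ZMod k)) = Equiv.refl (ZMod k) := by
      ext x; simp [ZMod.natCast_self]
    rw [h0, FreeGroup.freeGroupCongr_refl]; rfl
  -- conjugation identity
  have hconj : a' * g' * a'⁻¹ = T (FreeGroup.of (1 : ZMod k)) := by
    ext w
    show σ ((FreeGroup.of (0 : ZMod k)) * σ.symm w) = FreeGroup.of (1 : ZMod k) * w
    rw [map_mul, MulEquiv.apply_symm_apply]
    congr 1
    show FreeGroup.map (Equiv.addLeft (1 : ZMod k)) (FreeGroup.of (0 : ZMod k)) = _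
    rw [FreeGroup.map.of]
    norm_num
  have hinvg : h'⁻¹ * g' = a' := by
    show (g' * a'⁻¹)⁻¹ * g' = a'
    group
  -- the two homomorphisms from FreeGroup Bool to the model
  let π : FreeGroup Bool →* Equiv.Perm F :=
    FreeGroup.lift (fun b : Bool => if b then g' else h')
  let φ : FreeGroup Bool →* FreeGroup Bool :=
    FreeGroup.lift (fun b : Bool => if b then FreeGroup.of true
      else (FreeGroup.of false)⁻¹ * FreeGroup.of true * FreeGroup.of false)
  let ι : Bool → ZMod k := fun b => if b then 0 else 1
  -- π ∘ φ is T ∘ map ι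
  have hcomp : π.comp φ = T.comp (FreeGroup.map ι) := by
    apply FreeGroup.ext_hom
    intro b
    cases b with
    | true =>
        simp only [MonoidHom.comp_apply, FreeGroup.lift_apply_of, FreeGroup.map.of, Bool.false_eq_true, reduceIte, φ, π, ι]
        rfl
    | false =>
        simp only [MonoidHom.comp_apply, FreeGroup.lift_apply_of, FreeGroup.map.of, Bool.false_eq_true, reduceIte, φ, π, ι]
        rw [map_mul, map_mul, map_inv, FreeGroup.lift_apply_of, FreeGroup.lift_apply_of]
        simp only [Bool.false_eq_true, reduceIte]
        show h'⁻¹ * g' * h' = T (FreeGroup.of (1 : ZMod k))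
        rw [hinvg]
        show a' * (g' * a'⁻¹) = _
        rw [← mul_assoc, hconj]
  -- T ∘ map ι is injective
  have hTinj : Function.Injective T := MulAction.toPerm_injective
  have hmapinj : Function.Injective (FreeGroup.map ι : FreeGroup Bool →* F) := by
    have hleft : Function.LeftInverse
        (FreeGroup.map (fun z : ZMod k => decide (z = 0)))
        (FreeGroup.map ι : FreeGroup Bool →* F) := by
      intro x
      show FreeGroup.map _ (FreeGroup.map ι x) = x
      rw [FreeGroup.map.comp]
      have : ((fun z : ZMod k => decide (z = 0)) ∘ ι) = id := by
        funext b
        cases b <;> simp [ι, one_ne_zero]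
      rw [this, FreeGroup.map.id]
    exact hleft.injective
  have hπφinj : Function.Injective (π.comp φ) := by
    rw [hcomp]
    exact hTinj.comp hmapinj
  -- the relator dies in the model
  have hker : Subgroup.normalClosure
      {((FreeGroup.of false)⁻¹ * FreeGroup.of true : FreeGroup Bool) ^ k} ≤ π.ker := by
    apply Subgroup.normalClosure_le_normal
    rw [Set.singleton_subset_iff]
    show π (((FreeGroup.of false)⁻¹ * FreeGroup.of true) ^ k) = 1
    rw [map_pow, map_mul, map_inv, FreeGroup.lift_apply_of, FreeGroup.lift_apply_of]
    simp only [Bool.false_eq_true, reduceIte]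
    rw [hinvg, ha'k]
  -- the new lift factors as presentation lift ∘ φ
  have hfact : (FreeGroup.lift (fun x : Bool => if x then g else h⁻¹ * g * h) :
      FreeGroup Bool →* G)
      = (FreeGroup.lift (fun x : Bool => if x then g else h) : FreeGroup Bool →* G).comp φ := by
    apply FreeGroup.ext_hom
    intro b
    cases b with
    | true => simp [φ]
    | false =>
        simp only [MonoidHom.comp_apply, FreeGroup.lift_apply_of, Bool.false_eq_true, reduceIte, φ]
        rw [map_mul, map_mul, map_inv, FreeGroup.lift_apply_of, FreeGroup.lift_apply_of]
        simp only [Bool.false_eq_true, reduceIte]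
  -- conclude
  intro x y hxy
  have hx1 : ∀ w : FreeGroup Bool,
      (FreeGroup.lift (fun x : Bool => if x then g else h⁻¹ * g * h) :
        FreeGroup Bool →* G) w = 1 → w = 1 := by
    intro w hw
    rw [hfact, MonoidHom.comp_apply] at hw
    have hmem : φ w ∈ (FreeGroup.lift (fun x : Bool => if x then g else h) :
        FreeGroup Bool →* G).ker := hw
    rw [hpres] at hmem
    have : π (φ w) = 1 := hker hmem
    have : (π.comp φ) w = (π.comp φ) 1 := by simpa using this
    exact hπφinj this
  have : (FreeGroup.lift (fun x : Bool => if x then g else h⁻¹ * g * h) :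
      FreeGroup Bool →* G) (x * y⁻¹) = 1 := by
    rw [map_mul, map_inv, hxy, mul_inv_cancel]
  have := hx1 _ this
  exact mul_inv_eq_one.mp this
end

section
/- In the group G_k = ⟨g, h ∣ (h⁻¹g)^k⟩ with k ≥ 2, for each 1 ≤ ℓ ≤ k let E_ℓ be the subset of the Cayley graph obtained by cutting along the edges (g⁻¹, 1) and (g⁻¹(hg⁻¹)^{ℓ−1}, (hg⁻¹)^ℓ). Then hE_ℓ = E_ℓ \ {b_ℓ} with b_ℓ = (hg⁻¹)^ℓ, and b_ℓ = 1 if and only if ℓ = k. -/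
def sierpRels (k : ℕ) : Set (FreeGroup Bool) :=
  {((FreeGroup.of false)⁻¹ * FreeGroup.of true) ^ k}

/-- The group G_k = ⟨g, h ∣ (h⁻¹g)^k⟩. -/
abbrev Gk (k : ℕ) := PresentedGroup (sierpRels k)

/-- The left Cayley graph of G_k with respect to {g,h}, with the two edges
(g⁻¹, 1) and (g⁻¹(hg⁻¹)^{ℓ−1}, (hg⁻¹)^ℓ) cut. -/
def cutGraph (k : ℕ) (ℓ : ℕ) : SimpleGraph (Gk k) :=
  let g : Gk k := PresentedGroup.of true
  let h : Gk k := PresentedGroup.of false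
  SimpleGraph.fromRel (fun x y =>
    (y = g * x ∨ y = h * x) ∧
    ¬ ({x, y} : Set (Gk k)) = {g⁻¹, 1} ∧
    ¬ ({x, y} : Set (Gk k)) = {g⁻¹ * (h * g⁻¹) ^ (ℓ - 1), (h * g⁻¹) ^ ℓ})

/-- The subset E_ℓ: the connected component of 1 after cutting the two edges. -/
def cutComponent (k : ℕ) (ℓ : ℕ) : Set (Gk k) :=
  {y | (cutGraph k ℓ).Reachable 1 y}

/-!
Writing `s = h⁻¹g`, the Cayley graph of `G_k` is a tree of the `2k`-gons `⟨s⟩x ∪ g⟨s⟩x`, and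
both cut edges lie on the polygon through `g⁻¹` and `1`. Rather than using normal forms, we
separate `c = g⁻¹(hg⁻¹)^(ℓ-1)` from `1` by an integer potential `F` with
`F(gx) - F(x) = [x = g⁻¹]` and `F(hx) - F(x) = [x = c]`. It exists because this edge weight sums
to zero around every relator polygon: along `y → gy → sy` it equals `ψ(y) - ψ(sy)` for
`ψ(y) = #{j < ℓ | sʲy = g⁻¹}`. Walking along the arc from `g⁻¹` to `c` gives
`F(c) = F(g⁻¹) ≠ F(1)`. Once `c ∉ E_ℓ`, every edge `x — hx` met by `hE_ℓ` or `E_ℓ \ {b_ℓ}` is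
uncut; the remaining facts (`h ∉ {1, g, g⁻¹}`, `h² ≠ 1`, `orderOf s = k`) are read off
abelian quotients of `G_k`.
-/

theorem SimpleGraph.Reachable.eq_of_forall_adj {V β : Type*} {G : SimpleGraph V} (f : V → β)
    (hf : ∀ x y, G.Adj x y → f x = f y) {u v : V} (huv : G.Reachable u v) : f u = f v := by
  obtain ⟨p⟩ := huv
  induction p with
  | nil => rfl
  | cons hadj _ ih => exact (hf _ _ hadj).trans ih

section SkewPerm

variable {G A : Type*} [Group G] [AddCommGroup A]

def skewPerm (a : G) (δ : G → A) : Equiv.Perm (G × A) where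
  toFun p := (a * p.1, p.2 + δ p.1)
  invFun p := (a⁻¹ * p.1, p.2 - δ (a⁻¹ * p.1))
  left_inv p := by simp
  right_inv p := by simp

@[simp]
theorem skewPerm_apply (a : G) (δ : G → A) (p : G × A) :
    skewPerm a δ p = (a * p.1, p.2 + δ p.1) :=
  rfl

theorem skewPerm_mul (a b : G) (δ ε : G → A) :
    skewPerm a δ * skewPerm b ε = skewPerm (a * b) (fun y => ε y + δ (b * y)) := by
  ext p <;> simp [mul_assoc, add_assoc]

theorem skewPerm_one_zero : skewPerm (1 : G) (0 : G → A) = 1 := by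
  ext p <;> simp

theorem skewPerm_inv (a : G) (δ : G → A) :
    (skewPerm a δ)⁻¹ = skewPerm a⁻¹ (fun y => -δ (a⁻¹ * y)) := by
  rw [inv_eq_iff_mul_eq_one, skewPerm_mul, ← skewPerm_one_zero]
  congr 1
  · simp
  · funext y
    simp

theorem skewPerm_zero_pow (a : G) (n : ℕ) : skewPerm a (0 : G → A) ^ n = skewPerm (a ^ n) 0 := by
  induction n with
  | zero => simp [skewPerm_one_zero]
  | succ n ih =>
    rw [pow_succ, ih, skewPerm_mul, pow_succ]
    congr 1
    funext y
    simp

end SkewPerm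

namespace Gk

variable {k : ℕ}

def g : Gk k := PresentedGroup.of true

def h : Gk k := PresentedGroup.of false

def s : Gk k := h⁻¹ * g

theorem h_mul_s : (h : Gk k) * s = g := mul_inv_cancel_left _ _

theorem s_pow : (s : Gk k) ^ k = 1 :=
  PresentedGroup.one_of_mem (x := ((FreeGroup.of false)⁻¹ * FreeGroup.of true) ^ k) rfl

section Lift

variable {M : Type*} [Group M] (a b : M) (hb : b ^ k = 1)

def lift : Gk k →* M :=
  PresentedGroup.toGroup (f := fun i => if i then a else a * b⁻¹) (by
    rintro r rfl
    simp [hb])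

@[simp] theorem lift_g : lift a b hb g = a := PresentedGroup.toGroup.of _

@[simp] theorem lift_h : lift a b hb h = a * b⁻¹ := PresentedGroup.toGroup.of _

@[simp] theorem lift_s : lift a b hb s = b := by simp [s]

end Lift

theorem orderOf_s : orderOf (s : Gk k) = k := by
  refine Nat.dvd_antisymm (orderOf_dvd_of_pow_eq_one s_pow) ?_
  have hb : (Multiplicative.ofAdd (1 : ZMod k)) ^ k = 1 := by
    rw [← ofAdd_nsmul, nsmul_one, ZMod.natCast_self, ofAdd_zero]
  simpa [orderOf_ofAdd_eq_addOrderOf] using orderOf_map_dvd (lift 1 _ hb) s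

def exponentSum : Gk k →* Multiplicative ℤ := lift (.ofAdd 1) 1 (one_pow k)

@[simp] theorem exponentSum_g : exponentSum (g : Gk k) = .ofAdd 1 := by simp [exponentSum]

@[simp] theorem exponentSum_h : exponentSum (h : Gk k) = .ofAdd 1 := by simp [exponentSum]

theorem h_ne_one : (h : Gk k) ≠ 1 := fun e => by
  simpa using congrArg exponentSum e

theorem h_ne_inv_g : (h : Gk k) ≠ g⁻¹ := fun e => by
  simpa using congrArg (Multiplicative.toAdd ∘ exponentSum) e

theorem h_mul_h_ne_one : (h : Gk k) * h ≠ 1 := fun e => by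
  simpa using congrArg (Multiplicative.toAdd ∘ exponentSum) e

theorem h_ne_g (hk : k ≠ 1) : (h : Gk k) ≠ g := fun e => hk <| by
  rw [← orderOf_s (k := k), s, e, inv_mul_cancel, orderOf_one]

section Potential

variable {A : Type*} [AddCommGroup A] {δg δh : Gk k → A}

theorem exists_potential_of_hom (ρ : Gk k →* Equiv.Perm (Gk k × A))
    (hρg : ρ g = skewPerm g δg) (hρh : ρ h = skewPerm h δh) :
    ∃ F : Gk k → A, ∀ x, F (g * x) = F x + δg x ∧ F (h * x) = F x + δh x := by
  have hρ : ∀ x, ∃ δ, ρ x = skewPerm x δ := by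
    intro x
    have hx : x ∈ Subgroup.closure (Set.range (PresentedGroup.of : Bool → Gk k)) := by
      rw [PresentedGroup.closure_range_of]
      exact Subgroup.mem_top x
    induction hx using Subgroup.closure_induction with
    | mem y hy =>
      obtain ⟨_ | _, rfl⟩ := hy
      · exact ⟨δh, hρh⟩
      · exact ⟨δg, hρg⟩
    | one => exact ⟨0, by rw [map_one, skewPerm_one_zero]⟩
    | mul x y _ _ hx hy =>
      obtain ⟨δ, hδ⟩ := hx
      obtain ⟨ε, hε⟩ := hy
      exact ⟨_, by rw [map_mul, hδ, hε, skewPerm_mul]⟩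
    | inv x _ hx =>
      obtain ⟨δ, hδ⟩ := hx
      exact ⟨_, by rw [map_inv, hδ, skewPerm_inv]⟩
  refine ⟨fun x => (ρ x (1, 0)).2, fun x => ?_⟩
  have hρ1 : ρ x (1, 0) = (x, (ρ x (1, 0)).2) := by
    obtain ⟨δ, hδ⟩ := hρ x
    ext <;> simp [hδ]
  constructor
  · show (ρ (g * x) (1, 0)).2 = _
    rw [map_mul, Equiv.Perm.mul_apply, hρ1, hρg, skewPerm_apply]
  · show (ρ (h * x) (1, 0)).2 = _
    rw [map_mul, Equiv.Perm.mul_apply, hρ1, hρh, skewPerm_apply]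

/-- `s` acts by a conjugate of `(y, u) ↦ (s * y, u)`, so the relator `s ^ k` acts trivially. -/
theorem exists_potential (ψ : Gk k → A) (hψ : ∀ y, ψ y - ψ (s * y) = δg y - δh (s * y)) :
    ∃ F : Gk k → A, ∀ x, F (g * x) = F x + δg x ∧ F (h * x) = F x + δh x := by
  set V := skewPerm 1 (-ψ) * skewPerm s 0 * (skewPerm 1 (-ψ))⁻¹ with hV
  have hVk : V ^ k = 1 := by
    rw [hV, conj_pow, skewPerm_zero_pow, s_pow, skewPerm_one_zero, mul_one, mul_inv_cancel]
  have hVs : V = skewPerm s (fun y => ψ y - ψ (s * y)) := by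
    ext p <;> simp [hV, skewPerm_inv, sub_eq_add_neg, add_assoc]
  have hH : skewPerm g δg * V⁻¹ = skewPerm h δh := by
    rw [mul_inv_eq_iff_eq_mul, hVs, skewPerm_mul, h_mul_s]
    congr 1
    funext y
    rw [hψ, sub_add_cancel]
  exact exists_potential_of_hom (lift _ V hVk) (lift_g _ _ hVk) ((lift_h _ _ hVk).trans hH)

end Potential

def b (ℓ : ℕ) : Gk k := (h * g⁻¹) ^ ℓ

def c (ℓ : ℕ) : Gk k := g⁻¹ * (h * g⁻¹) ^ (ℓ - 1)

def cutRel (ℓ : ℕ) (x y : Gk k) : Prop :=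
  (y = g * x ∨ y = h * x) ∧ ({x, y} : Set (Gk k)) ≠ {g⁻¹, 1} ∧ ({x, y} : Set (Gk k)) ≠ {c ℓ, b ℓ}

theorem cutGraph_adj {ℓ : ℕ} {x y : Gk k} :
    (cutGraph k ℓ).Adj x y ↔ x ≠ y ∧ (cutRel ℓ x y ∨ cutRel ℓ y x) :=
  SimpleGraph.fromRel_adj _ _ _

theorem h_mul_inv_g_pow (n : ℕ) : ((h : Gk k) * g⁻¹) ^ n = g * (s ^ n)⁻¹ * g⁻¹ := by
  rw [← inv_pow, ← conj_pow, s]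
  group

theorem c_eq (ℓ : ℕ) : (c ℓ : Gk k) = (s ^ (ℓ - 1))⁻¹ * g⁻¹ := by
  rw [c, h_mul_inv_g_pow]
  group

theorem h_mul_c {ℓ : ℕ} (hℓ : 1 ≤ ℓ) : h * c ℓ = (b ℓ : Gk k) := by
  rw [c, b, ← mul_assoc, ← pow_succ', Nat.sub_add_cancel hℓ]

theorem h_mul_b_ne_c {ℓ : ℕ} (hℓ : 1 ≤ ℓ) : h * b ℓ ≠ (c ℓ : Gk k) := by
  rw [← h_mul_c hℓ, ← mul_assoc]
  exact fun e => h_mul_h_ne_one (mul_eq_right.mp e)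

theorem b_eq_one_iff {ℓ : ℕ} (hℓ1 : 1 ≤ ℓ) (hℓk : ℓ ≤ k) : (b ℓ : Gk k) = 1 ↔ ℓ = k := by
  rw [b, h_mul_inv_g_pow, conj_eq_one_iff, inv_eq_one, ← orderOf_dvd_iff_pow_eq_one, orderOf_s]
  exact ⟨fun hd => le_antisymm hℓk (Nat.le_of_dvd hℓ1 hd), fun e => e ▸ dvd_rfl⟩

theorem cutGraph_adj_h_mul (hk : k ≠ 1) {ℓ : ℕ} {x : Gk k} (hxc : x ≠ c ℓ)
    (hxb : x = b ℓ → h * x ≠ c ℓ) : (cutGraph k ℓ).Adj x (h * x) := by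
  refine cutGraph_adj.mpr ⟨fun e => h_ne_one (k := k) ?_, Or.inl ⟨Or.inr rfl, ?_, ?_⟩⟩
  · simpa using e
  · rw [Ne, Set.pair_eq_pair_iff]
    rintro (⟨rfl, e⟩ | ⟨rfl, e⟩)
    · exact h_ne_g hk (by simpa using mul_eq_one_iff_eq_inv.mp e)
    · exact h_ne_inv_g (by simpa using e)
  · rw [Ne, Set.pair_eq_pair_iff]
    rintro (⟨e, -⟩ | ⟨e, e'⟩)
    · exact hxc e
    · exact hxb e e'

theorem exists_cutPotential {ℓ : ℕ} (hℓ : 1 ≤ ℓ) : ∃ F : Gk k → ℤ, ∀ x,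
    F (g * x) = F x + ({g⁻¹} : Set (Gk k)).indicator 1 x ∧
    F (h * x) = F x + ({c ℓ} : Set (Gk k)).indicator 1 x := by
  refine exists_potential
    (fun y => ∑ j ∈ Finset.range ℓ, ({g⁻¹} : Set _).indicator 1 (s ^ j * y)) fun y => ?_
  have htel := Finset.sum_range_succ'
    (fun j => ({g⁻¹} : Set (Gk k)).indicator (1 : Gk k → ℤ) (s ^ j * y)) ℓ
  rw [Finset.sum_range_succ] at htel
  simp only [pow_succ, mul_assoc, pow_zero, one_mul] at htel
  have hc : s * y = c ℓ ↔ s ^ ℓ * y = g⁻¹ := by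
    rw [c_eq, eq_inv_mul_iff_mul_eq, ← mul_assoc, ← pow_succ, Nat.sub_add_cancel hℓ]
  have hcg : ({c ℓ} : Set (Gk k)).indicator (1 : Gk k → ℤ) (s * y) =
      ({g⁻¹} : Set (Gk k)).indicator 1 (s ^ ℓ * y) := by
    classical
    simp only [Set.indicator_apply, Set.mem_singleton_iff, Pi.one_apply, hc]
  rw [hcg]
  linarith

section CutPotential

variable {ℓ : ℕ} {F : Gk k → ℤ}
  (hF : ∀ x, F (g * x) = F x + ({g⁻¹} : Set (Gk k)).indicator 1 x ∧
    F (h * x) = F x + ({c ℓ} : Set (Gk k)).indicator 1 x)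
include hF

theorem potential_eq_of_cutRel (hℓ : 1 ≤ ℓ) {x y : Gk k} (hxy : cutRel ℓ x y) : F y = F x := by
  obtain ⟨rfl | rfl, hg, hc⟩ := hxy
  · rw [(hF x).1, Set.indicator_of_notMem, add_zero]
    rintro rfl
    exact hg (by rw [mul_inv_cancel])
  · rw [(hF x).2, Set.indicator_of_notMem, add_zero]
    rintro rfl
    exact hc (by rw [h_mul_c hℓ])

theorem potential_c_ne_one (hℓ1 : 1 ≤ ℓ) (hℓk : ℓ ≤ k) : F (c ℓ) ≠ F 1 := by
  have arc : ∀ j < ℓ, F ((s ^ j)⁻¹ * g⁻¹) = F g⁻¹ := by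
    intro j hj
    induction j with
    | zero => simp
    | succ j ih =>
      rw [← ih (by omega)]
      have hstep : (h : Gk k) * ((s ^ j)⁻¹ * g⁻¹) = g * ((s ^ (j + 1))⁻¹ * g⁻¹) := by
        rw [pow_succ, mul_inv_rev, ← h_mul_s]
        group
      have hh := (hF ((s ^ j)⁻¹ * g⁻¹)).2
      rw [hstep, (hF _).1, Set.indicator_of_notMem, Set.indicator_of_notMem] at hh
      · simpa using hh
      · rw [Set.mem_singleton_iff, c_eq]
        intro e
        have := pow_injOn_Iio_orderOf (x := (s : Gk k)) (by rw [orderOf_s]; simp; omega)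
          (by rw [orderOf_s]; simp; omega) (inv_inj.mp (mul_right_cancel e))
        omega
      · rw [Set.mem_singleton_iff, mul_eq_right, inv_eq_one]
        exact pow_ne_one_of_lt_orderOf (by omega) (by rw [orderOf_s]; omega)
  have h1 := (hF g⁻¹).1
  rw [mul_inv_cancel, Set.indicator_of_mem (Set.mem_singleton _)] at h1
  rw [c_eq, arc (ℓ - 1) (by omega), h1]
  simp

end CutPotential

theorem c_not_mem_cutComponent {ℓ : ℕ} (hℓ1 : 1 ≤ ℓ) (hℓk : ℓ ≤ k) :
    c ℓ ∉ cutComponent k ℓ := by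
  obtain ⟨F, hF⟩ := exists_cutPotential (k := k) hℓ1
  refine fun hc => potential_c_ne_one hF hℓ1 hℓk (hc.eq_of_forall_adj F fun x y hxy => ?_).symm
  obtain ⟨-, hxy | hyx⟩ := cutGraph_adj.mp hxy
  · exact (potential_eq_of_cutRel hF hℓ1 hxy).symm
  · exact potential_eq_of_cutRel hF hℓ1 hyx

end Gk

/-- In G_k (k ≥ 2), for 1 ≤ ℓ ≤ k, the set E_ℓ obtained by cutting along the edges
(g⁻¹,1) and (g⁻¹(hg⁻¹)^{ℓ−1},(hg⁻¹)^ℓ) satisfies hE_ℓ = E_ℓ \ {(hg⁻¹)^ℓ},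
and (hg⁻¹)^ℓ = 1 iff ℓ = k. -/
theorem Gk_cut_subsets (k : ℕ) (hk : 2 ≤ k) (ℓ : ℕ) (hℓ1 : 1 ≤ ℓ) (hℓk : ℓ ≤ k) :
    (PresentedGroup.of false * ·) '' cutComponent k ℓ =
      cutComponent k ℓ \
        {(PresentedGroup.of false * (PresentedGroup.of true : Gk k)⁻¹) ^ ℓ} ∧
    ((PresentedGroup.of false * (PresentedGroup.of true : Gk k)⁻¹) ^ ℓ = 1 ↔
      ℓ = k) := by
  show (Gk.h * ·) '' cutComponent k ℓ = cutComponent k ℓ \ {Gk.b ℓ} ∧ (Gk.b ℓ = 1 ↔ ℓ = k)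
  have hc := Gk.c_not_mem_cutComponent hℓ1 hℓk
  have hk1 : k ≠ 1 := by omega
  refine ⟨Set.ext fun y => ⟨?_, ?_⟩, Gk.b_eq_one_iff hℓ1 hℓk⟩
  · rintro ⟨x, hx, rfl⟩
    have hxc : x ≠ Gk.c ℓ := fun e => hc (e ▸ hx)
    refine ⟨hx.trans (Gk.cutGraph_adj_h_mul hk1 hxc ?_).reachable, ?_⟩
    · rintro rfl
      exact Gk.h_mul_b_ne_c hℓ1
    · rw [Set.mem_singleton_iff, ← Gk.h_mul_c hℓ1]
      exact fun e => hxc (mul_left_cancel e)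
  · rintro ⟨hy, hyb⟩
    refine ⟨Gk.h⁻¹ * y, ?_, mul_inv_cancel_left _ _⟩
    have hadj := Gk.cutGraph_adj_h_mul hk1 (ℓ := ℓ) (x := Gk.h⁻¹ * y) ?_ ?_
    · rw [mul_inv_cancel_left] at hadj
      exact hy.trans hadj.symm.reachable
    · intro e
      exact hyb (by rw [Set.mem_singleton_iff, ← Gk.h_mul_c hℓ1, ← e, mul_inv_cancel_left])
    · rintro - e
      rw [mul_inv_cancel_left] at e
      exact hc (e ▸ hy)
end

section
/- Let G be a group generated by {g,h}, and suppose there exist a subset E ⊆ G and disjoint nonempty finite subsets A, B ⊆ E with gE = E \ A and hE = E \ B. Then E is G-commensurated (γE △ E is finite for all γ ∈ G), and both E and its complement are infinite; consequently G has at least two ends. -/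
/-- If G is generated by {g,h} and gE = E \ A, hE = E \ B for disjoint nonempty finite
A, B ⊆ E, then E is G-commensurated and both E and Eᶜ are infinite; hence G has at
least two ends. -/
theorem wS_commensurated_two_ends (G : Type*) [Group G] (g h : G)
    (hgen : Subgroup.closure ({g, h} : Set G) = ⊤)
    (E A B : Set G) (hA : A ⊆ E) (hB : B ⊆ E)
    (hAne : A.Nonempty) (hBne : B.Nonempty) (hAfin : A.Finite) (hBfin : B.Finite)
    (hAB : Disjoint A B)
    (hgE : (g * ·) '' E = E \ A) (hhE : (h * ·) '' E = E \ B) :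
    (∀ γ : G, (symmDiff ((γ * ·) '' E) E).Finite) ∧ E.Infinite ∧ Eᶜ.Infinite := by
  obtain ⟨a, haA⟩ := hAne
  have haE : a ∈ E := hA haA
  have step : ∀ x ∈ E, g * x ∈ E \ A := by
    intro x hx
    rw [← hgE]; exact ⟨x, hx, rfl⟩
  have claim1 : ∀ (k : ℕ), ∀ x ∈ E, g ^ (k + 1) * x ∈ E \ A := by
    intro k
    induction k with
    | zero => intro x hx; simpa using step x hx
    | succ n ih =>
      intro x hx
      have h1 := ih x hx
      have h2 := step _ h1.1
      rw [← mul_assoc, ← pow_succ'] at h2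
      exact h2
  have hpow_ne : ∀ n m : ℕ, g ^ n = g ^ m → n = m := by
    intro n m hnm
    by_contra hne
    wlog hlt : n < m generalizing n m
    · exact this m n hnm.symm (Ne.symm hne) (by omega)
    have h1 : g ^ (m - n) = 1 := by
      have h2 : g ^ n * g ^ (m - n) = g ^ n * 1 := by
        rw [mul_one, ← pow_add, Nat.add_sub_cancel' hlt.le]; exact hnm.symm
      exact mul_left_cancel h2
    have h2 := claim1 (m - n - 1) a haE
    rw [show m - n - 1 + 1 = m - n by omega, h1, one_mul] at h2
    exact h2.2 haA
  refine ⟨?_, ?_, ?_⟩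
  · intro γ
    have hγ : γ ∈ Subgroup.closure ({g, h} : Set G) := by rw [hgen]; trivial
    induction hγ using Subgroup.closure_induction with
    | mem x hx =>
      rcases hx with rfl | rfl
      · rw [hgE]
        refine hAfin.subset ?_
        rw [Set.symmDiff_def]
        rintro y (⟨⟨hy, hyA⟩, hyE⟩ | ⟨hyE, hy⟩)
        · exact absurd hy hyE
        · by_contra hyA; exact hy ⟨hyE, hyA⟩
      · rw [hhE]
        refine hBfin.subset ?_
        rw [Set.symmDiff_def]
        rintro y (⟨⟨hy, hyB⟩, hyE⟩ | ⟨hyE, hy⟩)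
        · exact absurd hy hyE
        · by_contra hyB; exact hy ⟨hyE, hyB⟩
    | one => simp
    | mul x y hx hy ihx ihy =>
      have him : ((x * y) * ·) '' E = (x * ·) '' ((y * ·) '' E) := by
        rw [Set.image_image]; simp [mul_assoc]
      rw [him]
      have tri : symmDiff ((x * ·) '' ((y * ·) '' E)) E ⊆
          symmDiff ((x * ·) '' ((y * ·) '' E)) ((x * ·) '' E) ∪ symmDiff ((x * ·) '' E) E :=
        symmDiff_triangle _ _ _
      refine Set.Finite.subset (Set.Finite.union ?_ ihx) tri
      rw [← Set.image_symmDiff (mul_right_injective x)]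
      exact ihy.image _
    | inv x hx ih =>
      have h1 : (x⁻¹ * ·) '' ((x * ·) '' E) = E := by
        rw [Set.image_image]; simp
      have h2 : (x⁻¹ * ·) '' (symmDiff E ((x * ·) '' E)) = symmDiff ((x⁻¹ * ·) '' E) E := by
        rw [Set.image_symmDiff (mul_right_injective x⁻¹), h1]
      rw [← h2, symmDiff_comm E]
      exact ih.image _
  · apply Set.infinite_of_injective_forall_mem (f := fun n : ℕ => g ^ n * a)
    · intro n m hnm
      exact hpow_ne n m (mul_right_cancel hnm)
    · intro n
      cases n with
      | zero => simpa using haE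
      | succ k => exact (claim1 k a haE).1
  · apply Set.infinite_of_injective_forall_mem (f := fun n : ℕ => (g ^ (n + 1))⁻¹ * a)
    · intro n m hnm
      have h3 : (g ^ (n + 1))⁻¹ = (g ^ (m + 1))⁻¹ := mul_right_cancel hnm
      have := hpow_ne (n + 1) (m + 1) (inv_injective h3)
      omega
    · intro n hmem
      have h4 := claim1 n _ hmem
      rw [mul_inv_cancel_left] at h4
      exact h4.2 haA
end

section
/- Let G be a group with a subset E and element g ∈ G, and let A ⊆ E be a nonempty finite set with gE = E \ A. Then the sets g^n A for n ≥ 0 are pairwise disjoint nonempty subsets of E, and the sets g^{-n} A for n ≥ 1 are pairwise disjoint nonempty subsets of G \ E. In particular, E and G \ E are both infinite. -/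
/-- If gE = E \ A with A a nonempty finite subset of E, then the translates gⁿA (n ≥ 0)
are pairwise disjoint nonempty subsets of E, the translates g⁻ⁿA (n ≥ 1) are pairwise
disjoint nonempty subsets of G \ E, and E, G \ E are both infinite. -/
theorem translate_defect_iterates (G : Type*) [Group G] (g : G) (E A : Set G)
    (hA : A ⊆ E) (hAne : A.Nonempty) (hAfin : A.Finite)
    (hgE : (g * ·) '' E = E \ A) :
    (∀ n : ℕ, ((g ^ n * ·) '' A).Nonempty ∧ (g ^ n * ·) '' A ⊆ E) ∧
    (∀ m n : ℕ, m ≠ n → Disjoint ((g ^ m * ·) '' A) ((g ^ n * ·) '' A)) ∧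
    (∀ n : ℕ, 1 ≤ n → ((g ^ (-(n : ℤ)) * ·) '' A).Nonempty ∧
      (g ^ (-(n : ℤ)) * ·) '' A ⊆ Eᶜ) ∧
    (∀ m n : ℕ, 1 ≤ m → 1 ≤ n → m ≠ n →
      Disjoint ((g ^ (-(m : ℤ)) * ·) '' A) ((g ^ (-(n : ℤ)) * ·) '' A)) ∧
    E.Infinite ∧ Eᶜ.Infinite := by
  obtain ⟨a₀, ha₀⟩ := hAne
  have hstep : ∀ x ∈ E, g * x ∈ E ∧ g * x ∉ A := by
    intro x hx
    have : g * x ∈ E \ A := hgE ▸ ⟨x, hx, rfl⟩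
    exact ⟨this.1, this.2⟩
  have powE : ∀ n : ℕ, ∀ x ∈ E, g ^ n * x ∈ E := by
    intro n
    induction n with
    | zero => intro x hx; simpa using hx
    | succ n ih =>
      intro x hx
      have h := ih (g * x) (hstep x hx).1
      rw [pow_succ]
      simpa [mul_assoc] using h
  have key : ∀ k : ℕ, 1 ≤ k → ∀ x ∈ E, g ^ k * x ∈ E ∧ g ^ k * x ∉ A := by
    intro k hk x hx
    obtain ⟨j, rfl⟩ := Nat.exists_eq_add_of_le hk
    have hj : g ^ j * x ∈ E := powE j x hx
    have h := hstep _ hj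
    rw [pow_add, pow_one]
    simpa [mul_assoc] using h
  have dpos' : ∀ m n : ℕ, m < n → Disjoint ((g ^ m * ·) '' A) ((g ^ n * ·) '' A) := by
    intro m n hmn
    rw [Set.disjoint_left]
    rintro z ⟨a, ha, rfl⟩ ⟨b, hb, hz⟩
    simp only at hz
    have hb' : g ^ m * (g ^ (n - m) * b) = g ^ m * a := by
      rw [← mul_assoc, ← pow_add]
      rw [show m + (n - m) = n by omega]
      exact hz
    have ha' : a = g ^ (n - m) * b := (mul_left_cancel hb').symm
    exact (key (n - m) (by omega) b (hA hb)).2 (ha' ▸ ha)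
  have dpos : ∀ m n : ℕ, m ≠ n → Disjoint ((g ^ m * ·) '' A) ((g ^ n * ·) '' A) := by
    intro m n hmn
    rcases lt_or_gt_of_ne hmn with h | h
    · exact dpos' m n h
    · exact (dpos' n m h).symm
  have negmem : ∀ n : ℕ, 1 ≤ n → ∀ x ∈ A, g ^ (-(n : ℤ)) * x ∉ E := by
    intro n hn x hx h
    have hk := key n hn _ h
    have he : (g : G) ^ n * (g ^ (-(n : ℤ)) * x) = x := by
      rw [← mul_assoc, ← zpow_natCast g n, ← zpow_add]
      simp
    rw [he] at hk
    exact hk.2 hx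
  have dneg' : ∀ m n : ℕ, 1 ≤ m → m < n →
      Disjoint ((g ^ (-(m : ℤ)) * ·) '' A) ((g ^ (-(n : ℤ)) * ·) '' A) := by
    intro m n hm hmn
    rw [Set.disjoint_left]
    rintro z ⟨a, ha, rfl⟩ ⟨b, hb, hz⟩
    simp only at hz
    -- hz : g ^ (-(n:ℤ)) * b = g ^ (-(m:ℤ)) * a
    have h1 : (g : G) ^ (n : ℤ) * (g ^ (-(n : ℤ)) * b) =
        g ^ (n : ℤ) * (g ^ (-(m : ℤ)) * a) := by rw [hz]
    rw [← mul_assoc, ← mul_assoc, ← zpow_add, ← zpow_add] at h1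
    simp only [add_neg_cancel, zpow_zero, one_mul] at h1
    have hc : ((n - m : ℕ) : ℤ) = (n : ℤ) + -(m : ℤ) := by omega
    have h2 : b = g ^ (n - m) * a := by
      rw [h1, ← zpow_natCast, hc]
    exact (key (n - m) (by omega) a (hA ha)).2 (h2 ▸ hb)
  have dneg : ∀ m n : ℕ, 1 ≤ m → 1 ≤ n → m ≠ n →
      Disjoint ((g ^ (-(m : ℤ)) * ·) '' A) ((g ^ (-(n : ℤ)) * ·) '' A) := by
    intro m n hm hn hmn
    rcases lt_or_gt_of_ne hmn with h | h
    · exact dneg' m n hm h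
    · exact (dneg' n m hn h).symm
  have hEinf : E.Infinite := by
    apply Set.infinite_of_injective_forall_mem (f := fun n : ℕ => g ^ n * a₀)
    · intro m n h
      by_contra hne
      exact Set.disjoint_left.mp (dpos m n hne) ⟨a₀, ha₀, rfl⟩ ⟨a₀, ha₀, h.symm⟩
    · intro n
      exact powE n a₀ (hA ha₀)
  have hEcinf : Eᶜ.Infinite := by
    apply Set.infinite_of_injective_forall_mem (f := fun n : ℕ => g ^ (-((n + 1 : ℕ) : ℤ)) * a₀)
    · intro m n h
      by_contra hne
      exact Set.disjoint_left.mp (dneg (m + 1) (n + 1) (by omega) (by omega) (by omega))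
        ⟨a₀, ha₀, rfl⟩ ⟨a₀, ha₀, h.symm⟩
    · intro n
      exact negmem (n + 1) (by omega) a₀ ha₀
  refine ⟨?_, dpos, ?_, dneg, hEinf, hEcinf⟩
  · intro n
    exact ⟨⟨g ^ n * a₀, a₀, ha₀, rfl⟩, by rintro z ⟨a, ha, rfl⟩; exact powE n a (hA ha)⟩
  · intro n hn
    exact ⟨⟨g ^ (-(n : ℤ)) * a₀, a₀, ha₀, rfl⟩,
      by rintro z ⟨a, ha, rfl⟩; exact negmem n hn a ha⟩
end

section
/- Let G be a group and E ⊆ G a G-commensurated subset (γE △ E finite for all γ). Define f: G → ℤ by f(γ) = |E \ γE| − |γE \ E|. Then f is a group homomorphism. -/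
open scoped symmDiff
open Classical in
noncomputable def ind {α : Type*} (A : Set α) (x : α) : ℤ := if x ∈ A then 1 else 0

lemma ind_sub {α : Type*} (A B : Set α) (x : α) :
    ind A x - ind B x = ind (A \ B) x - ind (B \ A) x := by
  classical
  by_cases hA : x ∈ A <;> by_cases hB : x ∈ B <;>
    simp [ind, hA, hB]

lemma sum_ind {α : Type*} (A : Set α) (s : Finset α) (h : A ⊆ s) :
    ∑ x ∈ s, ind A x = (A.ncard : ℤ) := by
  classical
  have hA : A = ↑(s.filter (· ∈ A)) := by
    ext x; simp only [Finset.coe_filter, Set.mem_setOf_eq]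
    exact ⟨fun hx => ⟨h hx, hx⟩, fun hx => hx.2⟩
  calc ∑ x ∈ s, ind A x = ((s.filter (· ∈ A)).card : ℤ) := by
        simp [ind, Finset.sum_boole]
    _ = (A.ncard : ℤ) := by
        congr 1
        conv_rhs => rw [hA]
        rw [Set.ncard_coe_finset]

lemma defect_eq {α : Type*} (A B : Set α) (s : Finset α) (hs : (A ∆ B : Set α) ⊆ s) :
    ((A \ B).ncard : ℤ) - ((B \ A).ncard : ℤ) = ∑ x ∈ s, (ind A x - ind B x) := by
  have h1 : A \ B ⊆ s := fun x hx => hs (Or.inl hx)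
  have h2 : B \ A ⊆ s := fun x hx => hs (Or.inr hx)
  calc ((A \ B).ncard : ℤ) - ((B \ A).ncard : ℤ)
      = ∑ x ∈ s, ind (A \ B) x - ∑ x ∈ s, ind (B \ A) x := by
        rw [sum_ind _ _ h1, sum_ind _ _ h2]
    _ = ∑ x ∈ s, (ind (A \ B) x - ind (B \ A) x) := by rw [Finset.sum_sub_distrib]
    _ = ∑ x ∈ s, (ind A x - ind B x) :=
        Finset.sum_congr rfl fun x _ => (ind_sub A B x).symm

lemma cocycle {α : Type*} (A B C : Set α) (hAB : (A ∆ B).Finite) (hBC : (B ∆ C).Finite) :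
    ((A \ C).ncard : ℤ) - ((C \ A).ncard : ℤ) =
      (((A \ B).ncard : ℤ) - ((B \ A).ncard : ℤ)) +
      (((B \ C).ncard : ℤ) - ((C \ B).ncard : ℤ)) := by
  classical
  set s := (hAB.union hBC).toFinset with hsdef
  have hABs : (A ∆ B : Set α) ⊆ s := by
    rw [hsdef, Set.Finite.coe_toFinset]; exact Set.subset_union_left
  have hBCs : (B ∆ C : Set α) ⊆ s := by
    rw [hsdef, Set.Finite.coe_toFinset]; exact Set.subset_union_right
  have hACs : (A ∆ C : Set α) ⊆ s := by
    refine subset_trans ?_ (by rw [hsdef, Set.Finite.coe_toFinset])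
    exact symmDiff_triangle A B C
  rw [defect_eq A C s hACs, defect_eq A B s hABs, defect_eq B C s hBCs,
    ← Finset.sum_add_distrib]
  exact Finset.sum_congr rfl fun x _ => by ring

/-- The translation defect of a commensurated subset. -/
noncomputable def transDefect {G : Type*} [Group G] (E : Set G) (γ : G) : ℤ :=
  ((E \ (γ * ·) '' E).ncard : ℤ) - (((γ * ·) '' E \ E).ncard : ℤ)

/-- If E is a G-commensurated subset, then γ ↦ |E \ γE| − |γE \ E| is a group
homomorphism G → ℤ. -/
theorem transDefect_hom (G : Type*) [Group G] (E : Set G)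
    (hcom : ∀ γ : G, (symmDiff ((γ * ·) '' E) E).Finite) :
    ∀ γ₁ γ₂ : G, transDefect E (γ₁ * γ₂) = transDefect E γ₁ + transDefect E γ₂ := by
  intro γ₁ γ₂
  have hinj : ∀ γ : G, Function.Injective (γ * ·) := fun γ => mul_right_injective γ
  have himg : ((γ₁ * γ₂) * ·) '' E = (γ₁ * ·) '' ((γ₂ * ·) '' E) := by
    rw [← Set.image_comp]
    ext x
    simp [mul_assoc]
  have hAB : (E ∆ ((γ₁ * ·) '' E)).Finite := by
    rw [symmDiff_comm]; exact hcom γ₁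
  have hBC : (((γ₁ * ·) '' E) ∆ ((γ₁ * ·) '' ((γ₂ * ·) '' E))).Finite := by
    rw [← Set.image_symmDiff (hinj γ₁)]
    have h2 : (E ∆ ((γ₂ * ·) '' E)).Finite := by rw [symmDiff_comm]; exact hcom γ₂
    exact h2.image _
  have key := cocycle E ((γ₁ * ·) '' E) ((γ₁ * ·) '' ((γ₂ * ·) '' E)) hAB hBC
  have h3 : ((γ₁ * ·) '' E \ (γ₁ * ·) '' ((γ₂ * ·) '' E)).ncard
      = (E \ (γ₂ * ·) '' E).ncard := by
    rw [← Set.image_diff (hinj γ₁), Set.ncard_image_of_injective _ (hinj γ₁)]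
  have h4 : ((γ₁ * ·) '' ((γ₂ * ·) '' E) \ (γ₁ * ·) '' E).ncard
      = ((γ₂ * ·) '' E \ E).ncard := by
    rw [← Set.image_diff (hinj γ₁), Set.ncard_image_of_injective _ (hinj γ₁)]
  simp only [transDefect, himg]
  rw [key, h3, h4]
end

section
/- Let H be a two-ended finitely generated group with finite kernel of a surjective homomorphism onto ℤ witnessing two-endedness, and suppose g, h ∈ H generate H with a subset E ⊆ H and disjoint nonempty finite A, B ⊆ E satisfying gE = E \ A and hE = E \ B. Then a contradiction follows; i.e., no two-ended group admits such a configuration with generators g, h. -/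
section Aux

variable {H : Type*} [Group H]

private lemma nu_one (ν : H → ℤ) (hν : ∀ x y : H, ν (x * y) = ν x + ν y) : ν 1 = 0 := by
  have := hν 1 1
  rw [one_mul] at this
  omega

private lemma nu_inv (ν : H → ℤ) (hν : ∀ x y : H, ν (x * y) = ν x + ν y) (x : H) :
    ν x⁻¹ = - ν x := by
  have := hν x⁻¹ x
  rw [inv_mul_cancel] at this
  have h1 := nu_one ν hν
  omega

private lemma nu_pow (ν : H → ℤ) (hν : ∀ x y : H, ν (x * y) = ν x + ν y) (c : H) :
    ∀ n : ℕ, ν (c ^ n) = (n : ℤ) * ν c := by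
  intro n
  induction n with
  | zero => simpa using nu_one ν hν
  | succ n ih =>
    rw [pow_succ, hν, ih]
    push_cast
    ring

private lemma mem1 {g : H} {E A : Set H} (hgE : (g * ·) '' E = E \ A) {x : H} (hx : x ∈ E) :
    g * x ∈ E ∧ g * x ∉ A := by
  have hmem : g * x ∈ (g * ·) '' E := ⟨x, hx, rfl⟩
  rw [hgE] at hmem
  exact ⟨hmem.1, hmem.2⟩

private lemma mem3 {g : H} {E A : Set H} (hgE : (g * ·) '' E = E \ A) {x : H}
    (hx : g * x ∈ E) (hxA : g * x ∉ A) : x ∈ E := by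
  have hmem : g * x ∈ E \ A := ⟨hx, hxA⟩
  rw [← hgE] at hmem
  obtain ⟨y, hy, hyx⟩ := hmem
  have hyx' : g * y = g * x := hyx
  have : y = x := mul_left_cancel hyx'
  exact this ▸ hy

private lemma mem4 {g : H} {E A : Set H} (hgE : (g * ·) '' E = E \ A) {a : H} (ha : a ∈ A) :
    g⁻¹ * a ∉ E := by
  intro hcon
  have := (mem1 hgE hcon).2
  rw [mul_inv_cancel_left] at this
  exact this ha

private lemma memc {g : H} {E A : Set H} (hgE : (g * ·) '' E = E \ A) {x : H} (hx : x ∉ E) :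
    g⁻¹ * x ∉ E := by
  intro hcon
  have := (mem1 hgE hcon).1
  rw [mul_inv_cancel_left] at this
  exact hx this

private lemma powE {g : H} {E A : Set H} (hgE : (g * ·) '' E = E \ A) :
    ∀ (i : ℕ) {x : H}, x ∈ E → g ^ i * x ∈ E := by
  intro i
  induction i with
  | zero => intro x hx; simpa using hx
  | succ i ih =>
    intro x hx
    rw [pow_succ', mul_assoc]
    exact (mem1 hgE (ih hx)).1

private lemma powE1 {g : H} {E A : Set H} (hgE : (g * ·) '' E = E \ A) (i : ℕ) {x : H}
    (hx : x ∈ E) : g ^ (i + 1) * x ∈ E ∧ g ^ (i + 1) * x ∉ A := by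
  rw [pow_succ', mul_assoc]
  exact mem1 hgE (powE hgE i hx)

private lemma powEc {g : H} {E A : Set H} (hgE : (g * ·) '' E = E \ A) :
    ∀ (i : ℕ) {x : H}, x ∉ E → (g⁻¹) ^ i * x ∉ E := by
  intro i
  induction i with
  | zero => intro x hx; simpa using hx
  | succ i ih =>
    intro x hx
    rw [pow_succ', mul_assoc]
    exact memc hgE (ih hx)

private lemma shrink {E A : Set H} (c : H) (hc : ∀ x ∈ E, c * x ∈ E ∧ c * x ∉ A)
    {a : H} (haA : a ∈ A) (haE : a ∈ E) (m : ℕ) (hm : c ^ (m + 1) = 1) : False := by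
  have key : ∀ k : ℕ, ∀ x ∈ E, c ^ (k + 1) * x ∈ E ∧ c ^ (k + 1) * x ∉ A := by
    intro k
    induction k with
    | zero => intro x hx; simpa using hc x hx
    | succ k ih =>
      intro x hx
      rw [pow_succ', mul_assoc]
      exact hc _ (ih x hx).1
  have := key m a haE
  rw [hm, one_mul] at this
  exact this.2 haA

private lemma fin_ord (ν : H → ℤ) (hν : ∀ x y : H, ν (x * y) = ν x + ν y)
    (hK : {x : H | ν x = 0}.Finite) (c : H) (hc : ν c = 0) : ∃ m : ℕ, c ^ (m + 1) = 1 := by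
  have hpow : ∀ n : ℕ, ν (c ^ n) = 0 := by
    intro n
    induction n with
    | zero => simpa using nu_one ν hν
    | succ n ih => rw [pow_succ, hν]; omega
  have hrange : Set.range (fun n : ℕ => c ^ n) ⊆ {x : H | ν x = 0} := by
    rintro _ ⟨n, rfl⟩
    exact hpow n
  have hfin := hK.subset hrange
  have hninj : ¬ Function.Injective (fun n : ℕ => c ^ n) := by
    intro hinj
    exact hfin.not_infinite (Set.infinite_range_of_injective hinj)
  obtain ⟨i, j, hij, hne⟩ := Function.not_injective_iff.mp hninj
  have hij' : c ^ i = c ^ j := hij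
  have haux : ∀ i j : ℕ, i < j → c ^ i = c ^ j → ∃ m : ℕ, c ^ (m + 1) = 1 := by
    intro i j hlt he
    refine ⟨j - i - 1, ?_⟩
    have e : i + (j - i) = j := by omega
    have h1 : c ^ i * c ^ (j - i) = c ^ i * 1 := by
      rw [← pow_add, e, ← he, mul_one]
    have h2 : c ^ (j - i) = 1 := mul_left_cancel h1
    have e2 : j - i - 1 + 1 = j - i := by omega
    rw [e2]
    exact h2
  rcases lt_or_gt_of_ne hne with hlt | hlt
  · exact haux i j hlt hij'
  · exact haux j i hlt hij'.symm

private lemma rep (p q D : ℤ) (hp : 0 < p) (hq : 0 < q)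
    (hbez : ∃ m n : ℤ, m * p + n * q = 1) (hD : p * q ≤ D) :
    ∃ i j : ℕ, (i : ℤ) * p + (j : ℤ) * q = D := by
  obtain ⟨m, n, hmn⟩ := hbez
  set t := m * D / q with ht
  set u := m * D % q with hu
  have hu0 : 0 ≤ u := Int.emod_nonneg _ (ne_of_gt hq)
  have huq : u < q := Int.emod_lt_of_pos _ hq
  have h1 : q * t + u = m * D := by rw [hu, ht]; exact Int.mul_ediv_add_emod (m * D) q
  have key : D - u * p = q * (D * n + t * p) := by
    linear_combination (-D) * hmn + (-p) * h1
  have hup : u * p ≤ (q - 1) * p := mul_le_mul_of_nonneg_right (by omega) hp.le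
  have hj0 : 0 < D * n + t * p := by
    rcases le_or_gt (D * n + t * p) 0 with hle | hlt
    · exfalso
      have hq0 : q * (D * n + t * p) ≤ 0 := mul_nonpos_of_nonneg_of_nonpos hq.le hle
      nlinarith
    · exact hlt
  refine ⟨u.toNat, (D * n + t * p).toNat, ?_⟩
  rw [Int.toNat_of_nonneg hu0, Int.toNat_of_nonneg hj0.le]
  linear_combination -key

private lemma main_pos (g h : H) (hgen : Subgroup.closure ({g, h} : Set H) = ⊤)
    (ν : H → ℤ) (hν : ∀ x y : H, ν (x * y) = ν x + ν y)
    (hK : {x : H | ν x = 0}.Finite)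
    (hbez : ∃ m n : ℤ, m * ν g + n * ν h = 1)
    (E A B : Set H) (hA : A ⊆ E)
    (hAne : A.Nonempty) (hAfin : A.Finite) (hBfin : B.Finite)
    (hAB : Disjoint A B)
    (hgE : (g * ·) '' E = E \ A) (hhE : (h * ·) '' E = E \ B)
    (hp : 0 < ν g) (hq : 0 < ν h) : False := by
  obtain ⟨N, hN⟩ : ∃ N : ℤ, ∀ y ∈ A ∪ B, N ≤ ν y := by
    obtain ⟨N, hN⟩ := ((hAfin.union hBfin).image ν).bddBelow
    exact ⟨N, fun y hy => hN (Set.mem_image_of_mem ν hy)⟩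
  -- single step invariance
  have stepg : ∀ x : H, ν x + ν g < N → (x ∈ E ↔ g * x ∈ E) := by
    intro x hx
    constructor
    · intro hxE; exact (mem1 hgE hxE).1
    · intro hgxE
      refine mem3 hgE hgxE ?_
      intro hgxA
      have h1 := hN (g * x) (Or.inl hgxA)
      have h2 := hν g x
      omega
  have steph : ∀ x : H, ν x + ν h < N → (x ∈ E ↔ h * x ∈ E) := by
    intro x hx
    constructor
    · intro hxE; exact (mem1 hhE hxE).1
    · intro hgxE
      refine mem3 hhE hgxE ?_
      intro hgxB
      have h1 := hN (h * x) (Or.inr hgxB)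
      have h2 := hν h x
      omega
  -- invariance along any group element, with a constant depending on the element
  have hP : ∀ κ : H, ∃ C : ℤ, ∀ x : H, ν x + C < N → (x ∈ E ↔ κ * x ∈ E) := by
    intro κ
    have hκ : κ ∈ Subgroup.closure ({g, h} : Set H) := hgen ▸ Subgroup.mem_top κ
    induction hκ using Subgroup.closure_induction with
    | mem y hy =>
      simp only [Set.mem_insert_iff, Set.mem_singleton_iff] at hy
      rcases hy with hy | hy
      · rw [hy]; exact ⟨ν g, fun x hx => stepg x hx⟩
      · rw [hy]; exact ⟨ν h, fun x hx => steph x hx⟩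
    | one => exact ⟨0, fun x _ => by rw [one_mul]⟩
    | mul y z hy hz ihy ihz =>
      obtain ⟨C1, h1⟩ := ihy
      obtain ⟨C2, h2⟩ := ihz
      refine ⟨max C2 (ν z + C1), fun x hx => ?_⟩
      have m1 := le_max_left C2 (ν z + C1)
      have m2 := le_max_right C2 (ν z + C1)
      have e1 : x ∈ E ↔ z * x ∈ E := h2 x (by omega)
      have e2 : z * x ∈ E ↔ y * (z * x) ∈ E := h1 (z * x) (by have := hν z x; omega)
      rw [mul_assoc]
      exact e1.trans e2
    | inv y hy ih =>
      obtain ⟨C, h1⟩ := ih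
      refine ⟨C - ν y, fun x hx => ?_⟩
      have hsub : ν (y⁻¹ * x) + C < N := by
        have e1 := hν y⁻¹ x
        have e2 := nu_inv ν hν y
        omega
      have e := h1 (y⁻¹ * x) hsub
      rw [mul_inv_cancel_left] at e
      exact e.symm
  -- uniform constant over the finite kernel
  choose f hf using hP
  obtain ⟨C0, hC0⟩ := (hK.image f).bddAbove
  have hker_inv : ∀ κ : H, ν κ = 0 → ∀ x : H, ν x + C0 < N → (x ∈ E ↔ κ * x ∈ E) := by
    intro κ hκ x hx
    have hle : f κ ≤ C0 := hC0 (Set.mem_image_of_mem f hκ)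
    exact hf κ x (by omega)
  -- descending chain inside E
  obtain ⟨a, haA⟩ := hAne
  have hstep : ∀ x ∈ E, ∃ y ∈ E, ν y ≤ ν x - 1 := by
    intro x hx
    by_cases hxA : x ∈ A
    · have hxB : x ∉ B := fun hxB => (Set.disjoint_left.mp hAB hxA) hxB
      have hmem : x ∈ (h * ·) '' E := by rw [hhE]; exact ⟨hx, hxB⟩
      obtain ⟨y, hy, hyx⟩ := hmem
      have hyx' : h * y = x := hyx
      refine ⟨y, hy, ?_⟩
      have hx' : ν x = ν h + ν y := by rw [← hyx']; exact hν h y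
      omega
    · have hmem : x ∈ (g * ·) '' E := by rw [hgE]; exact ⟨hx, hxA⟩
      obtain ⟨y, hy, hyx⟩ := hmem
      have hyx' : g * y = x := hyx
      refine ⟨y, hy, ?_⟩
      have hx' : ν x = ν g + ν y := by rw [← hyx']; exact hν g y
      omega
  have hchain : ∀ M : ℤ, ∃ x ∈ E, ν x ≤ M := by
    have hdesc : ∀ k : ℕ, ∃ x ∈ E, ν x ≤ ν a - k := by
      intro k
      induction k with
      | zero => exact ⟨a, hA haA, by simp⟩
      | succ k ih =>
        obtain ⟨x, hx, hxk⟩ := ih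
        obtain ⟨y, hy, hyx⟩ := hstep x hx
        exact ⟨y, hy, by push_cast at hxk ⊢; omega⟩
    intro M
    obtain ⟨x, hx, hxk⟩ := hdesc (ν a - M).toNat
    refine ⟨x, hx, ?_⟩
    have := Int.self_le_toNat (ν a - M)
    omega
  -- the non-element z and its orbit of non-elements
  set z := g⁻¹ * a with hzdef
  have hz : z ∉ E := mem4 hgE haA
  -- pick a very low element of E
  obtain ⟨x, hxE, hxle⟩ := hchain (min (ν z - ν g * ν h) (N - C0 - 1))
  have hx1 : ν x ≤ ν z - ν g * ν h := le_trans hxle (min_le_left _ _)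
  have hx2 : ν x ≤ N - C0 - 1 := le_trans hxle (min_le_right _ _)
  obtain ⟨i, j, hij⟩ := rep (ν g) (ν h) (ν z - ν x) hp hq hbez (by omega)
  set y := (h⁻¹) ^ j * ((g⁻¹) ^ i * z) with hydef
  have hyE : y ∉ E := powEc hhE j (powEc hgE i hz)
  have hνy : ν y = ν x := by
    have e1 := hν ((h⁻¹) ^ j) ((g⁻¹) ^ i * z)
    have e2 := hν ((g⁻¹) ^ i) z
    have e3 := nu_pow ν hν h⁻¹ j
    have e4 := nu_pow ν hν g⁻¹ i
    have e5 := nu_inv ν hν h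
    have e6 := nu_inv ν hν g
    rw [hydef]
    rw [e1, e2, e3, e4, e5, e6]
    linarith [hij]
  have hκ0 : ν (y * x⁻¹) = 0 := by
    have e1 := hν y x⁻¹
    have e2 := nu_inv ν hν x
    omega
  have hiff := hker_inv (y * x⁻¹) hκ0 x (by omega)
  rw [inv_mul_cancel_right] at hiff
  exact hyE (hiff.mp hxE)

end Aux

/-- No two-ended group (witnessed by a surjection onto ℤ with finite kernel) admits
generators g, h with a subset E and disjoint nonempty finite A, B ⊆ E such that
gE = E \ A and hE = E \ B. -/
theorem no_wS_in_two_ended (H : Type*) [Group H] (g h : H)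
    (hgen : Subgroup.closure ({g, h} : Set H) = ⊤)
    (φ : H →* Multiplicative ℤ) (hsur : Function.Surjective φ)
    (hker : ((MonoidHom.ker φ : Subgroup H) : Set H).Finite)
    (E A B : Set H) (hA : A ⊆ E) (hB : B ⊆ E)
    (hAne : A.Nonempty) (hBne : B.Nonempty) (hAfin : A.Finite) (hBfin : B.Finite)
    (hAB : Disjoint A B)
    (hgE : (g * ·) '' E = E \ A) (hhE : (h * ·) '' E = E \ B) :
    False := by
  set ν : H → ℤ := fun x => Multiplicative.toAdd (φ x) with hνdef
  have hν : ∀ x y : H, ν (x * y) = ν x + ν y := by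
    intro x y
    simp [hνdef, map_mul]
  have hK : {x : H | ν x = 0}.Finite := by
    have hEq : {x : H | ν x = 0} = ((MonoidHom.ker φ : Subgroup H) : Set H) := by
      ext x
      simp only [Set.mem_setOf_eq, SetLike.mem_coe, MonoidHom.mem_ker, hνdef]
      constructor
      · intro hx
        have := congrArg Multiplicative.ofAdd hx
        simpa using this
      · intro hx
        rw [hx]
        rfl
    rw [hEq]
    exact hker
  have hbez : ∃ m n : ℤ, m * ν g + n * ν h = 1 := by
    obtain ⟨x, hx⟩ := hsur (Multiplicative.ofAdd 1)
    have hx1 : ν x = 1 := by simp [hνdef, hx]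
    have hmem : x ∈ Subgroup.closure ({g, h} : Set H) := hgen ▸ Subgroup.mem_top x
    have key : ∀ w ∈ Subgroup.closure ({g, h} : Set H), ∃ m n : ℤ, m * ν g + n * ν h = ν w := by
      intro w hw
      induction hw using Subgroup.closure_induction with
      | mem y hy =>
        simp only [Set.mem_insert_iff, Set.mem_singleton_iff] at hy
        rcases hy with hy | hy
        · rw [hy]; exact ⟨1, 0, by ring⟩
        · rw [hy]; exact ⟨0, 1, by ring⟩
      | one => exact ⟨0, 0, by simpa using (nu_one ν hν).symm⟩
      | mul y z hy hz ihy ihz =>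
        obtain ⟨m1, n1, h1⟩ := ihy
        obtain ⟨m2, n2, h2⟩ := ihz
        refine ⟨m1 + m2, n1 + n2, ?_⟩
        rw [hν]
        linear_combination h1 + h2
      | inv y hy ih =>
        obtain ⟨m1, n1, h1⟩ := ih
        refine ⟨-m1, -n1, ?_⟩
        rw [nu_inv ν hν]
        linear_combination -h1
    obtain ⟨m, n, hmn⟩ := key x hmem
    exact ⟨m, n, by rw [hmn, hx1]⟩
  obtain ⟨a, haA⟩ := hAne
  obtain ⟨b, hbB⟩ := hBne
  -- case analysis on the signs of ν g and ν h
  rcases lt_trichotomy (ν g) 0 with hpneg | hp0 | hppos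
  · rcases lt_trichotomy (ν h) 0 with hqneg | hq0 | hqpos
    · -- both negative: use -ν
      refine main_pos g h hgen (fun x => - ν x) ?_ ?_ ?_ E A B hA ⟨a, haA⟩ hAfin hBfin hAB
        hgE hhE ?_ ?_
      · intro x y
        show -ν (x * y) = -ν x + -ν y
        rw [hν]; ring
      · have hEq : {x : H | -ν x = 0} = {x : H | ν x = 0} := by
          ext x; simp [neg_eq_zero]
        show {x : H | -ν x = 0}.Finite
        rw [hEq]; exact hK
      · obtain ⟨m, n, hmn⟩ := hbez
        exact ⟨-m, -n, by show -m * -ν g + -n * -ν h = 1; linarith⟩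
      · show (0:ℤ) < -ν g; omega
      · show (0:ℤ) < -ν h; omega
    · -- ν h = 0 : h is torsion but hE = E \ B shrinks
      have hc : ∀ x ∈ E, h * x ∈ E ∧ h * x ∉ B := fun x hx => mem1 hhE hx
      obtain ⟨m, hm⟩ := fin_ord ν hν hK h hq0
      exact shrink h hc hbB (hB hbB) m hm
    · -- opposite signs: g negative, h positive
      set c := g ^ (ν h).natAbs * h ^ (ν g).natAbs with hcdef
      have hina : (ν h).natAbs = ((ν h).natAbs - 1) + 1 := by omega
      have hc : ∀ x ∈ E, c * x ∈ E ∧ c * x ∉ A := by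
        intro x hx
        have h1 : h ^ (ν g).natAbs * x ∈ E := powE hhE _ hx
        rw [hcdef, mul_assoc, hina]
        exact powE1 hgE _ h1
      have hc0 : ν c = 0 := by
        have e1 := nu_pow ν hν g (ν h).natAbs
        have e2 := nu_pow ν hν h (ν g).natAbs
        have e3 := hν (g ^ (ν h).natAbs) (h ^ (ν g).natAbs)
        have c1 : ((ν h).natAbs : ℤ) = ν h := by omega
        have c2 : ((ν g).natAbs : ℤ) = - ν g := by omega
        rw [hcdef, e3, e1, e2, c1, c2]
        ring
      obtain ⟨m, hm⟩ := fin_ord ν hν hK c hc0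
      exact shrink c hc haA (hA haA) m hm
  · -- ν g = 0 : g is torsion but gE = E \ A shrinks
    have hc : ∀ x ∈ E, g * x ∈ E ∧ g * x ∉ A := fun x hx => mem1 hgE hx
    obtain ⟨m, hm⟩ := fin_ord ν hν hK g hp0
    exact shrink g hc haA (hA haA) m hm
  · rcases lt_trichotomy (ν h) 0 with hqneg | hq0 | hqpos
    · -- opposite signs: g positive, h negative
      set c := g ^ (ν h).natAbs * h ^ (ν g).natAbs with hcdef
      have hina : (ν h).natAbs = ((ν h).natAbs - 1) + 1 := by omega
      have hc : ∀ x ∈ E, c * x ∈ E ∧ c * x ∉ A := by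
        intro x hx
        have h1 : h ^ (ν g).natAbs * x ∈ E := powE hhE _ hx
        rw [hcdef, mul_assoc, hina]
        exact powE1 hgE _ h1
      have hc0 : ν c = 0 := by
        have e1 := nu_pow ν hν g (ν h).natAbs
        have e2 := nu_pow ν hν h (ν g).natAbs
        have e3 := hν (g ^ (ν h).natAbs) (h ^ (ν g).natAbs)
        have c1 : ((ν h).natAbs : ℤ) = - ν h := by omega
        have c2 : ((ν g).natAbs : ℤ) = ν g := by omega
        rw [hcdef, e3, e1, e2, c1, c2]
        ring
      obtain ⟨m, hm⟩ := fin_ord ν hν hK c hc0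
      exact shrink c hc haA (hA haA) m hm
    · have hc : ∀ x ∈ E, h * x ∈ E ∧ h * x ∉ B := fun x hx => mem1 hhE hx
      obtain ⟨m, hm⟩ := fin_ord ν hν hK h hq0
      exact shrink h hc hbB (hB hbB) m hm
    · -- both positive: main case
      exact main_pos g h hgen ν hν hK hbez E A B hA ⟨a, haA⟩ hAfin hBfin hAB hgE hhE hppos hqpos
end
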